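/- For any real n×n matrices A and B, exp(A) − exp(B) = ∫₀¹ exp(t·A) · (A − B) · exp((1−t)·B) dt. -/

import Mathlib

/-! The product `t ↦ exp (t • a) * exp ((1 - t) • b)` runs from `exp b` at `t = 0` to `exp a`
at `t = 1`, and its derivative is the integrand; the formula is the fundamental theorem of
calculus for it. -/

attribute [local instance] Matrix.linftyOpNormedAddCommGroup Matrix.linftyOpNormedRing
  Matrix.linftyOpNormedAlgebra

open NormedSpace

section BanachAlgebra

variable {𝔸 : Type*} [NormedRing 𝔸] [NormedAlgebra ℝ 𝔸] [CompleteSpace 𝔸]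

theorem hasDerivAt_exp_one_sub_smul (b : 𝔸) (t : ℝ) :
    HasDerivAt (fun u : ℝ => exp ((1 - u) • b)) (-(b * exp ((1 - t) • b))) t := by
  have hlin : HasDerivAt (fun u : ℝ => 1 - u) (-1) t := (hasDerivAt_id t).const_sub 1
  simpa [Function.comp_def] using (hasDerivAt_exp_smul_const' b (1 - t)).scomp t hlin

theorem hasDerivAt_exp_smul_mul_exp_one_sub_smul (a b : 𝔸) (t : ℝ) :
    HasDerivAt (fun u : ℝ => exp (u • a) * exp ((1 - u) • b))
      (exp (t • a) * (a - b) * exp ((1 - t) • b)) t := by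
  refine ((hasDerivAt_exp_smul_const a t).mul (hasDerivAt_exp_one_sub_smul b t)).congr_deriv ?_
  rw [mul_neg, ← mul_assoc, ← sub_eq_add_neg, ← sub_mul, ← mul_sub]

theorem continuous_exp_smul_mul_mul_exp_one_sub_smul (a b c : 𝔸) :
    Continuous (fun t : ℝ => exp (t • a) * c * exp ((1 - t) • b)) :=
  ((differentiable_exp_smul_const ℝ a).continuous.mul continuous_const).mul
    ((differentiable_exp_smul_const ℝ b).continuous.comp (continuous_const.sub continuous_id))

theorem exp_sub_exp_eq_integral (a b : 𝔸) :
    exp a - exp b = ∫ t in (0 : ℝ)..1, exp (t • a) * (a - b) * exp ((1 - t) • b) := by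
  rw [intervalIntegral.integral_eq_sub_of_hasDerivAt
    (fun t _ => hasDerivAt_exp_smul_mul_exp_one_sub_smul a b t)
    ((continuous_exp_smul_mul_mul_exp_one_sub_smul a b (a - b)).intervalIntegrable 0 1)]
  simp

end BanachAlgebra

theorem matrix_exp_sub_exp {n : ℕ} (A B : Matrix (Fin n) (Fin n) ℝ) :
    NormedSpace.exp A - NormedSpace.exp B =
      ∫ t in (0:ℝ)..1,
        NormedSpace.exp (t • A) * (A - B) * NormedSpace.exp ((1 - t) • B) :=
  exp_sub_exp_eq_integral A B
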